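/- arXiv:1603.08389 — 3 statements merged into one kernel-verified Lean document; each statement's English description precedes it below -/
import Mathlib

section
/- There exists a hidden Markov model on a 5-element state space in which the intrinsic σ-algebra is strictly coarser than the minimal separately measurable σ-algebra. Concretely: W = {1,...,5}, S = {0,1}, one action; β(1) = β(4) = β(5) = (δ_0 + δ_1)/2, β(2) = δ_0, β(3) = δ_1; α(1) = (δ_2 + δ_3)/2, α(2) = α(3) = α(4) = δ_4, α(5) = δ_5. Then states 1, 4, 5 are sensorily equivalent (they induce the same law of the sensor sequence), so the atoms of 𝒲_int are {1,4,5}, {2}, {3}; while the atoms of 𝒲_sep are {1}, {2}, {3}, {4,5}. Hence 𝒲_int ⊊ 𝒲_sep. -/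
open MeasureTheory
open scoped ENNReal

/-- The σ-algebra on `W` generated by the kernel `β : W → 𝒫(S)`, i.e. by the
evaluation maps `w ↦ β w B` for measurable `B ⊆ S`. -/
def sigmaBeta {W S : Type*} [MeasurableSpace S] (β : W → Measure S) :
    MeasurableSpace W :=
  ⨆ (B : Set S) (_ : MeasurableSet B),
    MeasurableSpace.comap (fun w => β w B) inferInstance

/-- The recursively defined σ-algebras `𝒲_0 = σ(β)`,
`𝒲_n = σ( w ↦ α_a(w)(B) : a ∈ A, B ∈ 𝒲_{n-1} )`. -/
def WnSeq {W S A : Type*} [MeasurableSpace W] [MeasurableSpace S]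
    (β : W → Measure S) (α : A → W → Measure W) : ℕ → MeasurableSpace W
  | 0 => sigmaBeta β
  | n + 1 =>
    ⨆ (a : A) (B : Set W) (_ : MeasurableSet[WnSeq β α n] B),
      MeasurableSpace.comap (fun w => α a w B) inferInstance

/-- `𝒲_sep := σ(⋃ n, 𝒲_n)`. -/
def Wsep {W S A : Type*} [MeasurableSpace W] [MeasurableSpace S]
    (β : W → Measure S) (α : A → W → Measure W) : MeasurableSpace W :=
  ⨆ n, WnSeq β α n

/-- The probability that the sensor sequence, started at world state `w` under the forced
action sequence `a`, lies in the cylinder `B₁ × ⋯ × Bₙ × S × ⋯` (given as a list).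
This encodes the law `P_S^{a_ℕ}(w) ∈ 𝒫(S^ℕ)` via its cylinder probabilities. -/
noncomputable def PS {W S A : Type*} [MeasurableSpace W] [MeasurableSpace S]
    (β : W → Measure S) (α : A → W → Measure W) :
    List (Set S) → W → (ℕ → A) → ℝ≥0∞
  | [], _, _ => 1
  | B :: Bs, w, a =>
    β w B * ∫⁻ w', PS β α Bs w' (fun n => a (n + 1)) ∂(α (a 0) w)

/-- The intrinsic σ-algebra `𝒲_int := σ( P_S^{a_ℕ} : a_ℕ ∈ A^ℕ )`, generated by the
cylinder evaluations of the sensor-sequence laws. -/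
noncomputable def Wint {W S A : Type*} [MeasurableSpace W] [MeasurableSpace S]
    (β : W → Measure S) (α : A → W → Measure W) : MeasurableSpace W :=
  ⨆ (a : ℕ → A) (Bs : List (Set S)) (_ : ∀ B ∈ Bs, MeasurableSet B),
    MeasurableSpace.comap (fun w => PS β α Bs w a) inferInstance

/-- Sensory equivalence: `w ∼ w'` iff `P_S^{a_ℕ}(w) = P_S^{a_ℕ}(w')` for every action
sequence `a_ℕ` (equality of all cylinder probabilities). -/
def sensEquiv {W S A : Type*} [MeasurableSpace W] [MeasurableSpace S]
    (β : W → Measure S) (α : A → W → Measure W) (w w' : W) : Prop :=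
  ∀ (a : ℕ → A) (Bs : List (Set S)), (∀ B ∈ Bs, MeasurableSet B) →
    PS β α Bs w a = PS β α Bs w' a

/-- The atom of the σ-algebra `m` containing `x`. -/
def atomOf {X : Type*} (m : MeasurableSpace X) (x : X) : Set X :=
  ⋂₀ {F : Set X | MeasurableSet[m] F ∧ x ∈ F}

/-- The sensor kernel of the five-state example (states `0,…,4` stand for `1,…,5`):
`β(1) = β(4) = β(5) = (δ₀ + δ₁)/2`, `β(2) = δ₀`, `β(3) = δ₁`. -/
noncomputable def betaEx : Fin 5 → MeasureTheory.Measure (Fin 2) := fun w =>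
  if w = 1 then MeasureTheory.Measure.dirac 0
  else if w = 2 then MeasureTheory.Measure.dirac 1
  else (2⁻¹ : ℝ≥0∞) • MeasureTheory.Measure.dirac 0 +
       (2⁻¹ : ℝ≥0∞) • MeasureTheory.Measure.dirac 1

/-- The (action-independent) world update kernel of the example:
`α(1) = (δ₂ + δ₃)/2`, `α(2) = α(3) = α(4) = δ₄`, `α(5) = δ₅`. -/
noncomputable def alphaEx : Unit → Fin 5 → MeasureTheory.Measure (Fin 5) := fun _ w =>
  if w = 0 then (2⁻¹ : ℝ≥0∞) • MeasureTheory.Measure.dirac 1 +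
                (2⁻¹ : ℝ≥0∞) • MeasureTheory.Measure.dirac 2
  else if w = 4 then MeasureTheory.Measure.dirac 4
  else MeasureTheory.Measure.dirac 3

/-!
In the states' Lean numbering `0, …, 4`: states `3` and `4` are absorbing and emit fair coin
flips, so their sensor sequence is i.i.d. fair. State `0` also emits a fair coin flip and then
moves to `1` or `2` with probability `1/2` each; these emit `0` resp. `1` deterministically and
then enter `3`, so after averaging over the move the whole sequence is again i.i.d. fair. The
first sensor value separates `{0, 3, 4}`, `{1}`, `{2}`, which gives the atoms of `Wint`. The
world update separates `0` (the only state that can reach `1`) from `3` and `4`, whereas the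
partition `{0}, {1}, {2}, {3, 4}` is already stable: `3` and `4` have the same sensor law and are
fixed by `α`, so no `WnSeq β α n` separates them. This gives the atoms of `Wsep`.
-/

section Partition

variable {X Y Z : Type*}

theorem comap_le_comap_top_of_factorsThrough [mZ : MeasurableSpace Z] {g : X → Z} {f : X → Y}
    (h : g.FactorsThrough f) : mZ.comap g ≤ (⊤ : MeasurableSpace Y).comap f := by
  rintro _ ⟨C, -, rfl⟩
  refine ⟨f '' (g ⁻¹' C), trivial, Set.ext fun x => ⟨?_, fun hx => ⟨x, hx, rfl⟩⟩⟩
  rintro ⟨y, hy, hyx⟩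
  show g x ∈ C
  exact h hyx ▸ hy

theorem comap_top_le_of_factorsThrough [Countable X] {m : MeasurableSpace X} [MeasurableSpace Z]
    [MeasurableSingletonClass Z] {g : X → Z} (hg : Measurable[m] g) {f : X → Y}
    (h : f.FactorsThrough g) : (⊤ : MeasurableSpace Y).comap f ≤ m := by
  rintro _ ⟨C, -, rfl⟩
  have hunion : f ⁻¹' C = ⋃ x ∈ f ⁻¹' C, g ⁻¹' {g x} := by
    ext y
    simp only [Set.mem_iUnion, Set.mem_preimage, Set.mem_singleton_iff, exists_prop]
    exact ⟨fun hy => ⟨y, hy, rfl⟩, fun ⟨x, hx, hxy⟩ => h hxy.symm ▸ hx⟩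
  rw [hunion]
  exact MeasurableSet.biUnion (Set.to_countable _) fun x _ => hg (measurableSet_singleton _)

theorem atomOf_comap_top (f : X → Y) (x : X) :
    atomOf ((⊤ : MeasurableSpace Y).comap f) x = f ⁻¹' {f x} := by
  refine subset_antisymm (Set.sInter_subset_of_mem ⟨⟨_, trivial, rfl⟩, rfl⟩) ?_
  rintro y hy F ⟨⟨C, -, rfl⟩, hxC⟩
  show f y ∈ C
  exact (show f y = f x from hy) ▸ hxC

end Partition

section HiddenMarkovModel

variable {W S A Y : Type*} [MeasurableSpace S] {β : W → Measure S}

theorem measurable_sigmaBeta_apply {B : Set S} (hB : MeasurableSet B) :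
    Measurable[sigmaBeta β] fun w => β w B :=
  Measurable.of_comap_le (le_iSup_of_le B (le_iSup_of_le hB le_rfl))

variable [MeasurableSpace W] {α : A → W → Measure W}

theorem measurable_PS_Wint (a : ℕ → A) {Bs : List (Set S)}
    (hBs : ∀ B ∈ Bs, MeasurableSet B) :
    Measurable[Wint β α] fun w => PS β α Bs w a :=
  Measurable.of_comap_le (le_iSup_of_le a (le_iSup_of_le Bs (le_iSup_of_le hBs le_rfl)))

theorem measurable_WnSeq_succ_apply (a : A) {n : ℕ} {B : Set W}
    (hB : MeasurableSet[WnSeq β α n] B) : Measurable[WnSeq β α (n + 1)] fun w => α a w B :=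
  Measurable.of_comap_le (le_iSup_of_le a (le_iSup_of_le B (le_iSup_of_le hB le_rfl)))

theorem WnSeq_le_Wsep (n : ℕ) : WnSeq β α n ≤ Wsep β α :=
  le_iSup (WnSeq β α) n

theorem Wint_le_comap_top {f : W → Y} (hf : ∀ x y, f x = f y → sensEquiv β α x y) :
    Wint β α ≤ (⊤ : MeasurableSpace Y).comap f :=
  iSup_le fun a => iSup_le fun Bs => iSup_le fun hBs =>
    comap_le_comap_top_of_factorsThrough fun x y hxy => hf x y hxy a Bs hBs

theorem Wsep_le_comap_top {f : W → Y} (hβ : ∀ x y, f x = f y → β x = β y)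
    (hα : ∀ a x y, f x = f y → ∀ B, MeasurableSet[(⊤ : MeasurableSpace Y).comap f] B →
      α a x B = α a y B) :
    Wsep β α ≤ (⊤ : MeasurableSpace Y).comap f := by
  refine iSup_le fun n => ?_
  induction n with
  | zero =>
    exact iSup_le fun B => iSup_le fun _ =>
      comap_le_comap_top_of_factorsThrough fun x y hxy => by rw [hβ x y hxy]
  | succ n ih =>
    exact iSup_le fun a => iSup_le fun B => iSup_le fun hB =>
      comap_le_comap_top_of_factorsThrough fun x y hxy => hα a x y hxy B (ih _ hB)

theorem PS_cons_of_eq_dirac [MeasurableSingletonClass W] {a : ℕ → A} {w w' : W}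
    (hα : α (a 0) w = Measure.dirac w') (B : Set S) (Bs : List (Set S)) :
    PS β α (B :: Bs) w a = β w B * PS β α Bs w' (fun n => a (n + 1)) := by
  rw [PS, hα, lintegral_dirac]

theorem PS_of_forall_eq_dirac [MeasurableSingletonClass W] {w : W}
    (hα : ∀ a, α a w = Measure.dirac w) (Bs : List (Set S)) (a : ℕ → A) :
    PS β α Bs w a = (Bs.map (β w)).prod := by
  induction Bs generalizing a with
  | nil => rfl
  | cons B Bs ih => rw [PS_cons_of_eq_dirac (hα _), ih, List.map_cons, List.prod_cons]

theorem PS_singleton {a : ℕ → A} {w : W} [IsProbabilityMeasure (α (a 0) w)] (B : Set S) :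
    PS β α [B] w a = β w B := by
  simp [PS]

end HiddenMarkovModel

namespace FiveState

noncomputable def fairCoin : Measure (Fin 2) :=
  (2⁻¹ : ℝ≥0∞) • Measure.dirac 0 + (2⁻¹ : ℝ≥0∞) • Measure.dirac 1

def intClass : Fin 5 → Fin 3 := ![0, 1, 2, 0, 0]

def sepClass : Fin 5 → Fin 4 := ![0, 1, 2, 3, 3]

instance (a : Unit) (w : Fin 5) : IsProbabilityMeasure (alphaEx a w) := by
  unfold alphaEx
  split_ifs
  · constructor
    simp [ENNReal.inv_two_add_inv_two]
  all_goals infer_instance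

theorem betaEx_apply_zero (w : Fin 5) : betaEx w {0} = ![2⁻¹, 1, 0, 2⁻¹, 2⁻¹] w := by
  fin_cases w <;> simp [betaEx]

theorem alphaEx_apply_one (a : Unit) (w : Fin 5) : alphaEx a w {1} = ![2⁻¹, 0, 0, 0, 0] w := by
  fin_cases w <;> simp [alphaEx]

theorem PS_of_absorbing {w : Fin 5} (hw : w = 3 ∨ w = 4) (Bs : List (Set (Fin 2)))
    (a : ℕ → Unit) : PS betaEx alphaEx Bs w a = (Bs.map fairCoin).prod := by
  rcases hw with rfl | rfl <;>
    exact PS_of_forall_eq_dirac (β := betaEx) (α := alphaEx) (fun _ => rfl) Bs a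

theorem PS_cons_of_betaEx_eq_dirac {w : Fin 5} {s : Fin 2} (hβ : betaEx w = Measure.dirac s)
    (hα : alphaEx () w = Measure.dirac 3) (B : Set (Fin 2)) (Bs : List (Set (Fin 2)))
    (a : ℕ → Unit) :
    PS betaEx alphaEx (B :: Bs) w a = Measure.dirac s B * (Bs.map fairCoin).prod := by
  rw [PS_cons_of_eq_dirac hα, hβ, PS_of_absorbing (.inl rfl)]

theorem PS_average_one_two (Bs : List (Set (Fin 2))) (a : ℕ → Unit) :
    2⁻¹ * PS betaEx alphaEx Bs 1 a + 2⁻¹ * PS betaEx alphaEx Bs 2 a =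
      (Bs.map fairCoin).prod := by
  rcases Bs with _ | ⟨B, Bs⟩
  · simp [PS, ENNReal.inv_two_add_inv_two]
  · rw [PS_cons_of_betaEx_eq_dirac rfl rfl, PS_cons_of_betaEx_eq_dirac rfl rfl, List.map_cons,
      List.prod_cons]
    simp only [fairCoin, Measure.add_apply, Measure.smul_apply, smul_eq_mul]
    ring

theorem PS_zero (Bs : List (Set (Fin 2))) (a : ℕ → Unit) :
    PS betaEx alphaEx Bs 0 a = (Bs.map fairCoin).prod := by
  rcases Bs with _ | ⟨B, Bs⟩
  · rfl
  · rw [PS, List.map_cons, List.prod_cons, ← PS_average_one_two]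
    simp only [alphaEx, if_pos, lintegral_add_measure, lintegral_smul_measure, lintegral_dirac,
      smul_eq_mul]
    rfl

theorem sensEquiv_of_intClass_eq {x y : Fin 5} (h : intClass x = intClass y) :
    sensEquiv betaEx alphaEx x y := by
  have hiid : ∀ w, intClass w = 0 → ∀ Bs a,
      PS betaEx alphaEx Bs w a = (Bs.map fairCoin).prod := by
    intro w hw Bs a
    fin_cases w
    · exact PS_zero Bs a
    all_goals first | exact PS_of_absorbing (by decide) Bs a | simp [intClass] at hw
  by_cases hx : intClass x = 0
  · exact fun a Bs _ => (hiid x hx Bs a).trans (hiid y (h ▸ hx) Bs a).symm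
  · obtain rfl : x = y := by revert x y; decide
    exact fun _ _ _ => rfl

theorem intClass_factorsThrough :
    intClass.FactorsThrough fun w => PS betaEx alphaEx [{0}] w (fun _ => ()) := by
  intro x y h
  simp only [PS_singleton, betaEx_apply_zero] at h
  fin_cases x <;> fin_cases y <;>
    first | rfl | norm_num [eq_comm (a := (0 : ℝ≥0∞)), eq_comm (a := (1 : ℝ≥0∞))] at h

theorem sensEquiv_iff {x y : Fin 5} :
    sensEquiv betaEx alphaEx x y ↔ intClass x = intClass y :=
  ⟨fun h => intClass_factorsThrough (h _ [{0}] (by simp)), sensEquiv_of_intClass_eq⟩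

theorem Wint_eq : Wint betaEx alphaEx = (⊤ : MeasurableSpace (Fin 3)).comap intClass :=
  le_antisymm (Wint_le_comap_top fun _ _ => sensEquiv_iff.2)
    (comap_top_le_of_factorsThrough (measurable_PS_Wint _ (by simp)) intClass_factorsThrough)

theorem measurableSet_sigmaBeta_singleton_one :
    MeasurableSet[sigmaBeta betaEx] ({1} : Set (Fin 5)) := by
  have h : ({1} : Set (Fin 5)) = (fun w => betaEx w {0}) ⁻¹' {1} := by
    ext w
    fin_cases w <;> simp [betaEx_apply_zero]
  rw [h]
  exact measurable_sigmaBeta_apply (measurableSet_singleton 0) (measurableSet_singleton 1)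

theorem sepClass_factorsThrough :
    sepClass.FactorsThrough fun w => (betaEx w {0}, alphaEx () w {1}) := by
  intro x y h
  simp only [Prod.mk.injEq, betaEx_apply_zero, alphaEx_apply_one] at h
  fin_cases x <;> fin_cases y <;>
    first | rfl | norm_num [eq_comm (a := (0 : ℝ≥0∞)), eq_comm (a := (1 : ℝ≥0∞))] at h

theorem Wsep_eq : Wsep betaEx alphaEx = (⊤ : MeasurableSpace (Fin 4)).comap sepClass := by
  refine le_antisymm (Wsep_le_comap_top ?_ ?_) (comap_top_le_of_factorsThrough ?_
    sepClass_factorsThrough)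
  · intro x y h
    fin_cases x <;> fin_cases y <;> first | rfl | simp [sepClass] at h
  · rintro a x y h _ ⟨C, -, rfl⟩
    obtain rfl | ⟨hx, hy⟩ : x = y ∨ (x = 3 ∨ x = 4) ∧ (y = 3 ∨ y = 4) := by
      revert x y; decide
    · rfl
    have hdirac : ∀ w : Fin 5, w = 3 ∨ w = 4 → alphaEx a w = Measure.dirac w := by
      rintro w (rfl | rfl) <;> rfl
    rw [hdirac x hx, hdirac y hy, Measure.dirac_apply, Measure.dirac_apply]
    classical
    simp only [Set.indicator_apply, Set.mem_preimage, h, Pi.one_apply]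
  · exact (((measurable_sigmaBeta_apply (measurableSet_singleton 0)).mono (WnSeq_le_Wsep 0)
      le_rfl).prodMk ((measurable_WnSeq_succ_apply () measurableSet_sigmaBeta_singleton_one).mono
      (WnSeq_le_Wsep 1) le_rfl))

theorem comap_intClass_lt_comap_sepClass :
    (⊤ : MeasurableSpace (Fin 3)).comap intClass <
      (⊤ : MeasurableSpace (Fin 4)).comap sepClass := by
  refine lt_of_le_of_ne (comap_le_comap_top_of_factorsThrough ?_) fun h => ?_
  · intro x y
    revert x y
    decide
  · have hatom := congrArg (atomOf · 0) h
    simp only [atomOf_comap_top] at hatom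
    have h3 : (3 : Fin 5) ∈ intClass ⁻¹' {intClass 0} := rfl
    rw [hatom] at h3
    exact absurd h3 (by simp [sepClass])

end FiveState

/-- in the five-state hidden Markov model above, the states `1, 4, 5`
(here `0, 3, 4`) are sensorily equivalent while `2, 3` (here `1, 2`) are not equivalent
to them or to each other; the atoms of `𝒲_int` are `{1,4,5}, {2}, {3}` and the atoms of
`𝒲_sep` are `{1}, {2}, {3}, {4,5}`; hence `𝒲_int ⊊ 𝒲_sep`. -/
theorem stmt10 :
    sensEquiv betaEx alphaEx 0 3 ∧ sensEquiv betaEx alphaEx 0 4 ∧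
    ¬ sensEquiv betaEx alphaEx 0 1 ∧ ¬ sensEquiv betaEx alphaEx 0 2 ∧
    ¬ sensEquiv betaEx alphaEx 1 2 ∧
    atomOf (Wint betaEx alphaEx) 0 = {0, 3, 4} ∧
    atomOf (Wint betaEx alphaEx) 1 = {1} ∧
    atomOf (Wint betaEx alphaEx) 2 = {2} ∧
    atomOf (Wsep betaEx alphaEx) 0 = {0} ∧
    atomOf (Wsep betaEx alphaEx) 1 = {1} ∧
    atomOf (Wsep betaEx alphaEx) 2 = {2} ∧
    atomOf (Wsep betaEx alphaEx) 3 = {3, 4} ∧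
    Wint betaEx alphaEx < Wsep betaEx alphaEx := by
  open FiveState in
  simp only [sensEquiv_iff, Wint_eq, Wsep_eq, atomOf_comap_top]
  refine ⟨rfl, rfl, by decide, by decide, by decide, ?_, ?_, ?_, ?_, ?_, ?_, ?_,
    comap_intClass_lt_comap_sepClass⟩ <;>
  · ext w
    fin_cases w <;> simp [intClass, sepClass]
end

section
/- Let W be a compact metrizable space, S a measurable space, and suppose β : W → 𝒫(S) and each α_a : W → 𝒫(W) (a ∈ A) are continuous, where 𝒫(W) carries the weak topology. Then for every action sequence a_ℕ ∈ A^ℕ, the map w ↦ P_S^{a_ℕ}(w) from W to 𝒫(S^ℕ) is continuous (with respect to the topology of convergence of finite-dimensional cylinder probabilities). -/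
/-!
By induction on the list of test functions, every finite-dimensional expectation is a
finite continuous function of the initial state: continuous functions on a compact space
are bounded, and integrating a bounded continuous function against a weakly continuous
kernel gives a continuous function, which is the defining property of the weak topology.
-/

open MeasureTheory
open scoped ENNReal NNReal BoundedContinuousFunction

/-- The expectation `E[ g₁(S₁) ⋯ gₙ(Sₙ) ]` of a finite product of test functions of the
sensor sequence, started at world state `w` under forced actions `a`.  These functionals
determine the law `P_S^{a_ℕ}(w)` of the sensor sequence in the topology of weak
convergence of finite-dimensional (cylinder) distributions. -/
noncomputable def PSE {W S A : Type*} [MeasurableSpace W] [MeasurableSpace S]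
    (β : W → Measure S) (α : A → W → Measure W) :
    List (S → ℝ≥0) → W → (ℕ → A) → ℝ≥0∞
  | [], _, _ => 1
  | g :: gs, w, a =>
    (∫⁻ s, (g s : ℝ≥0∞) ∂(β w)) *
      ∫⁻ w', PSE β α gs w' (fun n => a (n + 1)) ∂(α (a 0) w)

lemma exists_continuousMap_lintegral_eq {X Y : Type*}
    [TopologicalSpace X] [TopologicalSpace Y] [CompactSpace Y]
    [MeasurableSpace Y] [OpensMeasurableSpace Y]
    {κ : X → ProbabilityMeasure Y} (hκ : Continuous κ)
    {f : Y → ℝ≥0} (hf : Continuous f) :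
    ∃ F : C(X, ℝ≥0), ∀ x, ∫⁻ y, (f y : ℝ≥0∞) ∂(κ x : Measure Y) = F x :=
  let f' : Y →ᵇ ℝ≥0 := BoundedContinuousFunction.mkOfCompact ⟨f, hf⟩
  ⟨⟨fun x => (κ x).toFiniteMeasure.testAgainstNN f',
    (ProbabilityMeasure.continuous_testAgainstNN_eval f').comp hκ⟩,
    fun x => (FiniteMeasure.testAgainstNN_coe_eq (μ := (κ x).toFiniteMeasure) (f := f')).symm⟩

lemma exists_continuousMap_PSE_eq {W S A : Type*}
    [TopologicalSpace W] [CompactSpace W] [MeasurableSpace W] [OpensMeasurableSpace W]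
    [TopologicalSpace S] [CompactSpace S] [MeasurableSpace S] [OpensMeasurableSpace S]
    {β : W → ProbabilityMeasure S} {α : A → W → ProbabilityMeasure W}
    (hβ : Continuous β) (hα : ∀ a : A, Continuous (α a))
    {gs : List (S → ℝ≥0)} (hgs : ∀ g ∈ gs, Continuous g) (a : ℕ → A) :
    ∃ F : C(W, ℝ≥0), ∀ w,
      PSE (fun w => (β w : Measure S)) (fun a w => (α a w : Measure W)) gs w a = F w := by
  induction gs generalizing a with
  | nil => exact ⟨1, fun w => by simp [PSE]⟩
  | cons g gs ih =>
    obtain ⟨G, hG⟩ := exists_continuousMap_lintegral_eq hβ (hgs g List.mem_cons_self)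
    obtain ⟨F, hF⟩ := ih (fun g' hg' => hgs g' (List.mem_cons_of_mem g hg')) (fun n => a (n + 1))
    obtain ⟨H, hH⟩ := exists_continuousMap_lintegral_eq (hα (a 0)) F.continuous
    refine ⟨G * H, fun w => ?_⟩
    simp only [PSE, hF, hG, hH, ContinuousMap.mul_apply, ENNReal.coe_mul]

theorem stmt11_general {W S A : Type*}
    [TopologicalSpace W] [CompactSpace W]
    [MeasurableSpace W] [OpensMeasurableSpace W]
    [TopologicalSpace S] [CompactSpace S]
    [MeasurableSpace S] [OpensMeasurableSpace S]
    (β : W → ProbabilityMeasure S) (α : A → W → ProbabilityMeasure W)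
    (hβ : Continuous β) (hα : ∀ a : A, Continuous (α a)) :
    ∀ (a : ℕ → A) (gs : List (S → ℝ≥0)), (∀ g ∈ gs, Continuous g) →
      Continuous fun w =>
        PSE (fun w => (β w : Measure S)) (fun a w => (α a w : Measure W)) gs w a := by
  intro a gs hgs
  obtain ⟨F, hF⟩ := exists_continuousMap_PSE_eq hβ hα hgs a
  exact (ENNReal.continuous_coe.comp F.continuous).congr fun w => (hF w).symm

/-- if `W` is compact metrizable and the kernels `β : W → 𝒫(S)` and
`α_a : W → 𝒫(W)` are continuous (weak topology), then for every action sequence `a_ℕ`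
the map `w ↦ P_S^{a_ℕ}(w)` is continuous for the topology of convergence of
finite-dimensional cylinder distributions, i.e. all finite-dimensional expectations of
continuous test functions depend continuously on `w`. -/
theorem stmt11 {W S A : Type*}
    [TopologicalSpace W] [CompactSpace W] [TopologicalSpace.MetrizableSpace W]
    [MeasurableSpace W] [OpensMeasurableSpace W]
    [TopologicalSpace S] [CompactSpace S] [TopologicalSpace.MetrizableSpace S]
    [MeasurableSpace S] [OpensMeasurableSpace S]
    (β : W → ProbabilityMeasure S) (α : A → W → ProbabilityMeasure W)
    (hβ : Continuous β) (hα : ∀ a : A, Continuous (α a)) :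
    ∀ (a : ℕ → A) (gs : List (S → ℝ≥0)), (∀ g ∈ gs, Continuous g) →
      Continuous fun w =>
        PSE (fun w => (β w : Measure S)) (fun a w => (α a w : Measure W)) gs w a :=
  stmt11_general β α hβ hα
end

section
/- For any two sub-σ-algebras 𝒜, 𝒲, 𝒲' of σ-algebras on spaces A and W respectively, the product σ-algebra of 𝒜 with the intersection 𝒲 ∩ 𝒲' is contained in the intersection of the product σ-algebras: 𝒜 ⊗ (𝒲 ∩ 𝒲') ⊆ (𝒜 ⊗ 𝒲) ∩ (𝒜 ⊗ 𝒲'). Moreover, this inclusion can be strict: there exist a set A with σ-algebra 𝒜 and a set W with σ-algebras 𝒲, 𝒲' such that 𝒜 ⊗ (𝒲 ∩ 𝒲') ⊊ (𝒜 ⊗ 𝒲) ∩ (𝒜 ⊗ 𝒲'). -/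
/-!
The inclusion is monotonicity of `𝒜 ⊗ ·`. For strictness take `A = W` with `𝒜` discrete and look
at the diagonal. A set in `𝒜 ⊗ 𝒢` depends on the second coordinate only through countably many
sets of `𝒢`, so if the diagonal lies in `⊤ ⊗ 𝒢` then `𝒢` is countably separated. By the
Lusin–Souslin theorem a countably separated σ-algebra contained in a standard Borel one is all of
it. So if `𝒲` is standard Borel and `𝒲'` has measurable diagonal but does not contain `𝒲`, the
diagonal lies in `(⊤ ⊗ 𝒲) ∩ (⊤ ⊗ 𝒲')` but not in `⊤ ⊗ (𝒲 ∩ 𝒲')`. On `ℝ × Bool` such a `𝒲'` is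
the pullback of the Borel sets along the injection flipping the `Bool` coordinate over a
non-Borel set of reals.
-/

open MeasureTheory MeasurableSpace Set Function Cardinal

namespace MeasurableSpace

variable {A W : Type*}

theorem prod_mono {mA mA' : MeasurableSpace A} {m m' : MeasurableSpace W} (hA : mA ≤ mA')
    (hW : m ≤ m') : mA.prod m ≤ mA'.prod m' :=
  sup_le_sup (comap_mono hA) (comap_mono hW)

theorem prod_inf_le_inf_prod (mA : MeasurableSpace A) (m₁ m₂ : MeasurableSpace W) :
    mA.prod (m₁ ⊓ m₂) ≤ mA.prod m₁ ⊓ mA.prod m₂ :=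
  le_inf (prod_mono le_rfl inf_le_left) (prod_mono le_rfl inf_le_right)

theorem exists_countable_of_measurableSet_prod {mA : MeasurableSpace A} {m : MeasurableSpace W}
    {E : Set (A × W)} (hE : MeasurableSet[mA.prod m] E) :
    ∃ 𝒞 : Set (Set W), 𝒞.Countable ∧ (∀ C ∈ 𝒞, MeasurableSet[m] C) ∧
      ∀ a w w', (∀ C ∈ 𝒞, w ∈ C ↔ w' ∈ C) → ((a, w) ∈ E ↔ (a, w') ∈ E) := by
  have hgen := measurableSet_sup.mp hE
  clear hE
  induction hgen with
  | basic E hE =>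
    rcases hE with ⟨S, ⟨-, rfl⟩⟩ | ⟨T, ⟨hT, rfl⟩⟩
    · exact ⟨∅, countable_empty, by simp, fun _ _ _ _ => Iff.rfl⟩
    · exact ⟨{T}, countable_singleton T, by simpa using hT, fun _ _ _ h => h T rfl⟩
  | empty => exact ⟨∅, countable_empty, by simp, fun _ _ _ _ => Iff.rfl⟩
  | compl E _ ih =>
    obtain ⟨𝒞, h𝒞, hm, hdep⟩ := ih
    exact ⟨𝒞, h𝒞, hm, fun a w w' h => not_congr (hdep a w w' h)⟩
  | iUnion E _ ih =>
    choose 𝒞 h𝒞 hm hdep using ih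
    refine ⟨⋃ n, 𝒞 n, countable_iUnion h𝒞, fun C hC => ?_, fun a w w' h => ?_⟩
    · obtain ⟨n, hn⟩ := mem_iUnion.mp hC
      exact hm n C hn
    · simp only [mem_iUnion]
      exact exists_congr fun n => hdep n a w w' fun C hC => h C (mem_iUnion_of_mem n hC)

theorem countablySeparated_of_measurableSet_diagonal {mA m : MeasurableSpace W}
    (h : MeasurableSet[mA.prod m] (diagonal W)) : @CountablySeparated W m := by
  obtain ⟨𝒞, h𝒞, hm, hdep⟩ := exists_countable_of_measurableSet_prod h
  exact (@countablySeparated_def W m).mpr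
    ⟨𝒞, h𝒞, hm, fun x _ y _ hxy => (hdep x x y hxy).mp rfl⟩

theorem le_of_countablySeparated_inf [mW : MeasurableSpace W] [StandardBorelSpace W]
    {m : MeasurableSpace W} (h : @CountablySeparated W (mW ⊓ m)) : mW ≤ m := by
  intro S hS
  have hid : @Measurable W W mW (mW ⊓ m) id := fun _ hT => (measurableSet_inf.mp hT).1
  have := @MeasurableSet.image_of_measurable_injOn W W (mW ⊓ m) S id h mW _ hS hid (injOn_id S)
  rw [image_id] at this
  exact (measurableSet_inf.mp this).2

theorem measurableEq_comap {Y : Type*} [mY : MeasurableSpace Y] [MeasurableEq Y] {f : W → Y}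
    (hf : Injective f) : @MeasurableEq W (mY.comap f) := by
  let := mY.comap f
  have hdiag : diagonal W = Prod.map f f ⁻¹' diagonal Y := by
    ext ⟨x, y⟩
    simp [hf.eq_iff]
  exact ⟨hdiag ▸ measurableSet_diagonal.preimage
    ((comap_measurable f).prodMap (comap_measurable f))⟩

theorem top_prod_inf_lt_inf_top_prod [mW : MeasurableSpace W] [StandardBorelSpace W]
    {m : MeasurableSpace W} [@MeasurableEq W m] (h : ¬ mW ≤ m) :
    (⊤ : MeasurableSpace W).prod (mW ⊓ m) <
      (⊤ : MeasurableSpace W).prod mW ⊓ (⊤ : MeasurableSpace W).prod m := by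
  refine (prod_inf_le_inf_prod _ _ _).lt_of_not_ge fun hle => h ?_
  have hdiag (m' : MeasurableSpace W) (h' : @MeasurableEq W m') :
      MeasurableSet[(⊤ : MeasurableSpace W).prod m'] (diagonal W) :=
    prod_mono le_top le_rfl _ h'.measurableSet_diagonal
  exact @le_of_countablySeparated_inf W mW _ m <| countablySeparated_of_measurableSet_diagonal <|
    hle _ (measurableSet_inf.mpr ⟨hdiag mW inferInstance, hdiag m ‹_›⟩)

end MeasurableSpace

section FlipOn

variable {α : Type*}

open Classical in
noncomputable def flipOn (N : Set α) (p : α × Bool) : α × Bool :=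
  (p.1, xor p.2 (decide (p.1 ∈ N)))

theorem flipOn_injective (N : Set α) : Injective (flipOn N) := by
  rintro ⟨x, b⟩ ⟨y, c⟩ h
  simp only [flipOn, Prod.mk.injEq] at h
  obtain ⟨rfl, h⟩ := h
  simp_all

theorem not_le_comap_flipOn [MeasurableSpace α] {N : Set α} (hN : ¬ MeasurableSet N) :
    ¬ (inferInstance : MeasurableSpace (α × Bool)) ≤
      MeasurableSpace.comap (flipOn N) inferInstance := by
  intro h
  obtain ⟨T, hT, hTN⟩ := measurableSet_comap.mp
    (h _ (MeasurableSet.univ.prod (measurableSet_singleton true)))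
  have hslice : (fun x => (x, true)) ⁻¹' T = Nᶜ := by
    ext x
    have h₀ := Set.ext_iff.mp hTN (x, false)
    have h₁ := Set.ext_iff.mp hTN (x, true)
    by_cases hx : x ∈ N <;> simp [flipOn, hx] at h₀ h₁ ⊢ <;> assumption
  have hNc : MeasurableSet Nᶜ := hslice ▸ measurable_prodMk_right hT
  exact hN (by simpa using hNc.compl)

end FlipOn

theorem exists_not_measurableSet {α : Type*} [MeasurableSpace α] [CountablyGenerated α]
    (h : 𝔠 ≤ #α) : ∃ N : Set α, ¬ MeasurableSet N := by
  by_contra! hall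
  have hle : #{s : Set α | MeasurableSet s} ≤ 𝔠 := by
    rw [← generateFrom_countableGeneratingSet (α := α)]
    exact cardinal_measurableSet_le_continuum
      (countable_countableGeneratingSet.le_aleph0.trans aleph0_le_continuum)
  have hall' : {s : Set α | MeasurableSet s} = Set.univ := eq_univ_of_forall hall
  rw [hall', mk_univ, mk_set] at hle
  exact (cantor 𝔠).not_ge ((power_le_power_left two_ne_zero h).trans hle)

/-- `𝒜 ⊗ (𝒲 ⊓ 𝒲') ⊆ (𝒜 ⊗ 𝒲) ⊓ (𝒜 ⊗ 𝒲')` always holds, and the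
inclusion can be strict. -/
theorem stmt16 :
    (∀ (A W : Type) (mA : MeasurableSpace A) (mW mW' : MeasurableSpace W),
      mA.prod (mW ⊓ mW') ≤ (mA.prod mW) ⊓ (mA.prod mW')) ∧
    (∃ (A W : Type) (mA : MeasurableSpace A) (mW mW' : MeasurableSpace W),
      mA.prod (mW ⊓ mW') < (mA.prod mW) ⊓ (mA.prod mW')) := by
  refine ⟨fun A W mA mW mW' => prod_inf_le_inf_prod mA mW mW', ?_⟩
  obtain ⟨N, hN⟩ := exists_not_measurableSet (α := ℝ) mk_real.ge
  have := measurableEq_comap (mY := (inferInstance : MeasurableSpace (ℝ × Bool)))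
    (flipOn_injective N)
  exact ⟨ℝ × Bool, ℝ × Bool, ⊤, _, _, top_prod_inf_lt_inf_top_prod (not_le_comap_flipOn hN)⟩
end
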